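/- Define P_n recursively on (n+1)-tuples of smooth circle functions by P₀ = P (a Fourier multiplier) and P_{n+1}(u₀,...,u_{n+1}) = [u_{n+1}D, P_n(·, u₁,...,uₙ)]u₀ − Σ_{k=1}^{n} P_n(u₀,...,u_{n+1}Du_k,...,uₙ), where D = d/dx. Then for all integers m₀,...,mₙ, P_n(e_{m₀},...,e_{mₙ}) = p_n(m₀,...,mₙ) e_{m₀+⋯+mₙ}, where p₀ = p is the symbol of P and p_{n+1}(m₀,...,m_{n+1}) = (2πi)[(m₀+⋯+mₙ)p_n(m₀,...,mₙ) − Σ_{k=0}^{n} m_k p_n(m₀,...,m_k+m_{n+1},...,mₙ)]. -/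
import Mathlib


open Finset

/-- The exponential `e_m(x) = exp(2πimx)` on the circle `ℝ/ℤ`. -/
noncomputable def eC (m : ℤ) : ℝ → ℂ :=
  fun x => Complex.exp (2 * Real.pi * Complex.I * m * (x : ℂ))

/-- The multilinear operators `P_n` obtained by differentiating the conjugated operator:
`P₀ = P` and
`P_{n+1}(u₀,…,u_{n+1}) = [u_{n+1}D, P_n(·,u₁,…,uₙ)]u₀ − Σ_{k=1}^n P_n(u₀,…,u_{n+1}Du_k,…,uₙ)`,
where `D = d/dx`. The distinguished argument `u₀` is kept separate. -/
noncomputable def Pmulti (P : (ℝ → ℂ) → (ℝ → ℂ)) :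
    (n : ℕ) → (ℝ → ℂ) → (Fin n → (ℝ → ℂ)) → (ℝ → ℂ)
  | 0, u₀, _ => P u₀
  | n + 1, u₀, u =>
      (fun x => u (Fin.last n) x * deriv (Pmulti P n u₀ (fun j => u j.castSucc)) x)
        - Pmulti P n (fun x => u (Fin.last n) x * deriv u₀ x) (fun j => u j.castSucc)
        - ∑ k : Fin n,
            Pmulti P n u₀
              (Function.update (fun j => u j.castSucc) k
                (fun x => u (Fin.last n) x * deriv (u k.castSucc) x))

/-- The multi-symbols `p_n`: `p₀ = p` and
`p_{n+1}(m₀,…,m_{n+1}) = 2πi [(m₀+⋯+mₙ) pₙ(m₀,…,mₙ) − Σ_{k=0}^n m_k pₙ(…, m_k+m_{n+1}, …)]`. -/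
noncomputable def symb (p : ℤ → ℂ) : (n : ℕ) → ℤ → (Fin n → ℤ) → ℂ
  | 0, m₀, _ => p m₀
  | n + 1, m₀, m =>
      (2 * Real.pi * Complex.I) *
        (((m₀ + ∑ k : Fin n, m k.castSucc : ℤ) : ℂ) * symb p n m₀ (fun j => m j.castSucc)
          - ((m₀ : ℂ) * symb p n (m₀ + m (Fin.last n)) (fun j => m j.castSucc)
            + ∑ k : Fin n, ((m k.castSucc : ℤ) : ℂ) *
                symb p n m₀
                  (Function.update (fun j => m j.castSucc) k
                    (m k.castSucc + m (Fin.last n)))))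

lemma eC_mul_eC (a b : ℤ) (x : ℝ) : eC a x * eC b x = eC (a + b) x := by
  simp only [eC, ← Complex.exp_add]; push_cast; ring_nf

lemma eC_congr {a b : ℤ} (h : a = b) (x : ℝ) : eC a x = eC b x := by rw [h]

lemma hasDerivAt_eC (m : ℤ) (x : ℝ) :
    HasDerivAt (eC m) (2 * Real.pi * Complex.I * m * eC m x) x := by
  have h : HasDerivAt (fun x : ℝ => 2 * Real.pi * Complex.I * m * (x : ℂ))
      (2 * Real.pi * Complex.I * m) x := by
    simpa using (Complex.ofRealCLM.hasDerivAt (x := x)).const_mul (2 * Real.pi * Complex.I * m)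
  have h2 := h.cexp
  unfold eC
  convert h2 using 1
  ring

lemma deriv_eC (m : ℤ) (x : ℝ) : deriv (eC m) x = 2 * Real.pi * Complex.I * m * eC m x :=
  (hasDerivAt_eC m x).deriv

lemma update_ceC {n : ℕ} (c : Fin n → ℂ) (m : Fin n → ℤ) (k : Fin n) (d : ℂ) (M : ℤ) :
    Function.update (fun j => fun x => c j * eC (m j) x) k (fun x => d * eC M x)
      = fun j => fun x => Function.update c k d j * eC (Function.update m k M j) x := by
  funext j
  rcases eq_or_ne j k with h | h
  · subst h; simp
  · simp [Function.update_of_ne h]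

lemma key (P : (ℝ → ℂ) → (ℝ → ℂ)) (p : ℤ → ℂ)
    (hP : ∀ m : ℤ, P (eC m) = fun x => p m * eC m x)
    (hsmul : ∀ (c : ℂ) (u : ℝ → ℂ), P (fun x => c * u x) = fun x => c * P u x) :
    ∀ (n : ℕ) (c₀ : ℂ) (m₀ : ℤ) (c : Fin n → ℂ) (m : Fin n → ℤ),
      Pmulti P n (fun x => c₀ * eC m₀ x) (fun j => fun x => c j * eC (m j) x)
        = fun x => (c₀ * ∏ j, c j) * symb p n m₀ m * eC (m₀ + ∑ j, m j) x := by
  intro n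
  induction n with
  | zero =>
    intro c₀ m₀ c m
    show P _ = _
    rw [hsmul, hP]
    funext x
    simp [symb, mul_assoc]
  | succ n ih =>
    intro c₀ m₀ c m
    have hB0 : (fun x => (c (Fin.last n) * eC (m (Fin.last n)) x) *
          deriv (fun x => c₀ * eC m₀ x) x)
        = fun x => (c (Fin.last n) * c₀ * (2 * Real.pi * Complex.I * m₀)) *
            eC (m₀ + m (Fin.last n)) x := by
      funext x
      rw [deriv_const_mul_field, deriv_eC, ← eC_mul_eC]
      ring
    have hC : ∀ k : Fin n,
        Pmulti P n (fun x => c₀ * eC m₀ x)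
          (Function.update (fun j => fun x => c j.castSucc * eC (m j.castSucc) x) k
            (fun x => (c (Fin.last n) * eC (m (Fin.last n)) x) *
              deriv (fun x => c k.castSucc * eC (m k.castSucc) x) x))
        = fun x => (c₀ * (c (Fin.last n) * (2 * Real.pi * Complex.I * (m k.castSucc : ℂ)) *
              ∏ j : Fin n, c j.castSucc)) *
            symb p n m₀ (Function.update (fun j => m j.castSucc) k
              (m k.castSucc + m (Fin.last n))) *
            eC (m₀ + ∑ j : Fin n, m j.castSucc + m (Fin.last n)) x := by
      intro k
      have h1 : (fun x => (c (Fin.last n) * eC (m (Fin.last n)) x) *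
            deriv (fun x => c k.castSucc * eC (m k.castSucc) x) x)
          = fun x => (c (Fin.last n) * c k.castSucc *
              (2 * Real.pi * Complex.I * (m k.castSucc : ℂ))) *
              eC (m k.castSucc + m (Fin.last n)) x := by
        funext x
        rw [deriv_const_mul_field, deriv_eC, ← eC_mul_eC]
        ring
      rw [h1, update_ceC, ih]
      have hp : (∏ j : Fin n, Function.update (fun j => c j.castSucc) k
            (c (Fin.last n) * c k.castSucc * (2 * Real.pi * Complex.I * (m k.castSucc : ℂ))) j)
          = c (Fin.last n) * (2 * Real.pi * Complex.I * (m k.castSucc : ℂ)) *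
              ∏ j : Fin n, c j.castSucc := by
        rw [Finset.prod_update_of_mem (mem_univ k),
          ← Finset.mul_prod_erase univ (fun j => c j.castSucc) (mem_univ k), Finset.sdiff_singleton_eq_erase]
        ring
      have hs : (∑ j : Fin n, Function.update (fun j => m j.castSucc) k
            (m k.castSucc + m (Fin.last n)) j)
          = (∑ j : Fin n, m j.castSucc) + m (Fin.last n) := by
        rw [Finset.sum_update_of_mem (mem_univ k),
          ← Finset.add_sum_erase univ (fun j => m j.castSucc) (mem_univ k), Finset.sdiff_singleton_eq_erase]
        ring
      rw [hp, hs]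
      funext x
      ring_nf
    show (fun x => (c (Fin.last n) * eC (m (Fin.last n)) x) *
          deriv (Pmulti P n (fun x => c₀ * eC m₀ x)
            (fun j => fun x => c j.castSucc * eC (m j.castSucc) x)) x)
        - Pmulti P n (fun x => (c (Fin.last n) * eC (m (Fin.last n)) x) *
            deriv (fun x => c₀ * eC m₀ x) x)
            (fun j => fun x => c j.castSucc * eC (m j.castSucc) x)
        - (∑ k : Fin n, Pmulti P n (fun x => c₀ * eC m₀ x)
            (Function.update (fun j => fun x => c j.castSucc * eC (m j.castSucc) x) k
              (fun x => (c (Fin.last n) * eC (m (Fin.last n)) x) *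
                deriv (fun x => c k.castSucc * eC (m k.castSucc) x) x))) = _
    rw [ih c₀ m₀ (fun j => c j.castSucc) (fun j => m j.castSucc),
      hB0, ih, Finset.sum_congr rfl (fun k _ => hC k)]
    funext x
    simp only [Pi.sub_apply, Finset.sum_apply]
    rw [deriv_const_mul_field, deriv_eC]
    have e1 : eC (m (Fin.last n)) x * eC (m₀ + ∑ j : Fin n, m j.castSucc) x
        = eC (m₀ + ∑ j : Fin n, m j.castSucc + m (Fin.last n)) x :=
      (eC_mul_eC _ _ x).trans (eC_congr (by ring) x)
    have e2 : eC (m₀ + m (Fin.last n) + ∑ j : Fin n, m j.castSucc) x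
        = eC (m₀ + ∑ j : Fin n, m j.castSucc + m (Fin.last n)) x := eC_congr (by ring) x
    have e3 : eC (m₀ + ∑ j : Fin (n + 1), m j) x
        = eC (m₀ + ∑ j : Fin n, m j.castSucc + m (Fin.last n)) x :=
      eC_congr (by rw [Fin.sum_univ_castSucc]; ring) x
    have hks : (∑ k : Fin n,
          c₀ * (c (Fin.last n) * (2 * (Real.pi:ℂ) * Complex.I * ((m k.castSucc : ℤ):ℂ)) *
            ∏ j : Fin n, c j.castSucc) *
            symb p n m₀ (Function.update (fun j => m j.castSucc) k
              (m k.castSucc + m (Fin.last n))) *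
            eC (m₀ + ∑ j : Fin n, m j.castSucc + m (Fin.last n)) x)
        = c₀ * c (Fin.last n) * (2 * (Real.pi:ℂ) * Complex.I) * (∏ j : Fin n, c j.castSucc) *
            eC (m₀ + ∑ j : Fin n, m j.castSucc + m (Fin.last n)) x *
            ∑ k : Fin n, ((m k.castSucc : ℤ):ℂ) *
              symb p n m₀ (Function.update (fun j => m j.castSucc) k
                (m k.castSucc + m (Fin.last n))) := by
      rw [Finset.mul_sum]
      exact Finset.sum_congr rfl fun k _ => by ring
    rw [e2, e3, Fin.prod_univ_castSucc, hks]
    simp only [symb]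
    linear_combination (norm := (push_cast; ring1))
      ((c₀ * ∏ j : Fin n, c j.castSucc) * symb p n m₀ (fun j => m j.castSucc) *
        (2 * (Real.pi:ℂ) * Complex.I * ((m₀ + ∑ j : Fin n, m j.castSucc : ℤ):ℂ)) *
        c (Fin.last n)) * e1


/-- If `P` is a (homogeneous, linear) Fourier multiplier with symbol
`p`, i.e. `P e_m = p(m) e_m` and `P (c·u) = c·P u`, then for all integers `m₀,…,mₙ`,
`P_n(e_{m₀},…,e_{mₙ}) = p_n(m₀,…,mₙ) e_{m₀+⋯+mₙ}`, where `p_n` is given by the stated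
recursion. -/
theorem stmt19 (P : (ℝ → ℂ) → (ℝ → ℂ)) (p : ℤ → ℂ)
    (hP : ∀ m : ℤ, P (eC m) = fun x => p m * eC m x)
    (hsmul : ∀ (c : ℂ) (u : ℝ → ℂ), P (fun x => c * u x) = fun x => c * P u x) :
    ∀ (n : ℕ) (m₀ : ℤ) (m : Fin n → ℤ),
      Pmulti P n (eC m₀) (fun j => eC (m j))
        = fun x => symb p n m₀ m * eC (m₀ + ∑ j, m j) x := by
  intro n m₀ m
  have h := key P p hP hsmul n 1 m₀ (fun _ => 1) m
  simpa using h
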